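/- Let κ_1, κ_2 ∈ ℝ, e_x, e_y ∈ ℂ not both zero, and s ∈ ℂ with s ≠ 0. Define x_1 = e_x e^{iκ_1} s, x_2 = ((e_x+e_y)/√2) e^{iκ_2} s, x_3 = e_y e^{-iκ_1} s, x_4 = ((−e_x+e_y)/√2) e^{-iκ_2} s. Then c_1 := x_1 conj(x_2) + conj(x_3) x_4 = (|s|²/√2)(|e_x|² + |e_y|²) e^{i(κ_1-κ_2)}. In particular c_1 ≠ 0 and if κ_1 - κ_2 ∈ (-π, π] then arg c_1 = κ_1 - κ_2. -/

import Mathlib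

/-! The polarization terms cancel because `a * conj b - conj b * a = 0`, leaving
`|a|² + |b|²`, while conjugating the steering phases turns `e^{iκ₁}` and `e^{-iκ₂}` into the
common factor `e^{i(κ₁ - κ₂)}`. The result is a positive real times that phase, so it is nonzero and
its principal argument is `κ₁ - κ₂` as soon as this lies in `(-π, π]`. -/

open Complex ComplexConjugate

lemma arg_ofReal_mul_exp_I_mul {r θ : ℝ} (hr : 0 < r) (hθ : θ ∈ Set.Ioc (-Real.pi) Real.pi) :
    arg (r * exp (I * θ)) = θ := by
  rw [arg_real_mul _ hr, mul_comm, arg_exp_mul_I, toIocMod_eq_self]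
  simpa [neg_add_eq_sub, two_mul] using hθ

lemma norm_sq_add_norm_sq_pos {E : Type*} [NormedAddCommGroup E] {a b : E} (h : a ≠ 0 ∨ b ≠ 0) :
    0 < ‖a‖ ^ 2 + ‖b‖ ^ 2 := by
  rcases h with h | h
  · have := norm_pos_iff.2 h; positivity
  · have := norm_pos_iff.2 h; positivity

lemma mul_conj_add_add_conj_mul_neg_add (a b : ℂ) :
    a * conj (a + b) + conj b * (-a + b) = ((‖a‖ ^ 2 + ‖b‖ ^ 2 : ℝ) : ℂ) := by
  push_cast
  rw [← mul_conj', ← conj_mul' b, map_add]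
  ring

lemma conj_exp_I_mul (θ : ℝ) : conj (exp (I * θ)) = exp (-(I * θ)) := by
  rw [← exp_conj, map_mul, conj_I, conj_ofReal, neg_mul]

lemma uca_cross_correlation_eq (κ₁ κ₂ : ℝ) (a b s : ℂ) :
    a * exp (I * κ₁) * s * conj ((a + b) / Real.sqrt 2 * exp (I * κ₂) * s)
      + conj (b * exp (-(I * κ₁)) * s) * ((-a + b) / Real.sqrt 2 * exp (-(I * κ₂)) * s)
      = ((‖s‖ ^ 2 / Real.sqrt 2 : ℝ) : ℂ) * ((‖a‖ ^ 2 + ‖b‖ ^ 2 : ℝ) : ℂ)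
          * exp (I * (κ₁ - κ₂ : ℝ)) := by
  have hconj_neg : conj (exp (-(I * κ₁))) = exp (I * κ₁) := by
    rw [← conj_conj (exp (I * κ₁)), conj_exp_I_mul]
  rw [← mul_conj_add_add_conj_mul_neg_add, ofReal_sub, sub_eq_add_neg, mul_add I, mul_neg, exp_add]
  simp only [map_mul, map_div₀, conj_ofReal, conj_exp_I_mul, hconj_neg]
  push_cast
  rw [← mul_conj' s]
  field_simp

theorem stmt_7 (κ₁ κ₂ : ℝ) (ex ey : ℂ) (hne : ex ≠ 0 ∨ ey ≠ 0)
    (s : ℂ) (hs : s ≠ 0)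
    (x₁ x₂ x₃ x₄ : ℂ)
    (hx₁ : x₁ = ex * Complex.exp (Complex.I * κ₁) * s)
    (hx₂ : x₂ = ((ex + ey) / Real.sqrt 2) * Complex.exp (Complex.I * κ₂) * s)
    (hx₃ : x₃ = ey * Complex.exp (-(Complex.I * κ₁)) * s)
    (hx₄ : x₄ = ((-ex + ey) / Real.sqrt 2) * Complex.exp (-(Complex.I * κ₂)) * s)
    (c₁ : ℂ)
    (hc₁ : c₁ = x₁ * starRingEnd ℂ x₂ + starRingEnd ℂ x₃ * x₄) :
    c₁ = ((‖s‖ ^ 2 / Real.sqrt 2 : ℝ) : ℂ)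
          * ((‖ex‖ ^ 2 + ‖ey‖ ^ 2 : ℝ) : ℂ)
          * Complex.exp (Complex.I * (κ₁ - κ₂ : ℝ)) ∧
    c₁ ≠ 0 ∧
    (κ₁ - κ₂ ∈ Set.Ioc (-Real.pi) Real.pi → Complex.arg c₁ = κ₁ - κ₂) := by
  have hc : c₁ = ((‖s‖ ^ 2 / Real.sqrt 2 : ℝ) : ℂ) * ((‖ex‖ ^ 2 + ‖ey‖ ^ 2 : ℝ) : ℂ)
      * Complex.exp (Complex.I * (κ₁ - κ₂ : ℝ)) := by
    subst hx₁ hx₂ hx₃ hx₄ hc₁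
    exact uca_cross_correlation_eq κ₁ κ₂ ex ey s
  have hpos : 0 < ‖s‖ ^ 2 / Real.sqrt 2 * (‖ex‖ ^ 2 + ‖ey‖ ^ 2) := by
    have := norm_pos_iff.2 hs
    have := norm_sq_add_norm_sq_pos hne
    positivity
  rw [← ofReal_mul] at hc
  refine ⟨by rw [hc, ofReal_mul], ?_, fun hκ => ?_⟩
  · rw [hc]
    exact mul_ne_zero (ofReal_ne_zero.2 hpos.ne') (exp_ne_zero _)
  · rw [hc]
    exact arg_ofReal_mul_exp_I_mul hpos hκ
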